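/- Let S be the 4×4 matrix with rows (1,0,0,-1), (0,1,1,0), (0,1,-1,0), (1,0,0,1) and define F(A) = S⁻¹·A·S for a 4×4 real matrix A. A 4×4 real matrix A = (a_{i,j}) with all row sums equal to 1 is a strand symmetric (SSM) matrix if and only if F(A) has rows (λ, 1-λ, 0, 0), (1-μ, μ, 0, 0), (0, 0, α, α'), (0, 0, β', β) for some real numbers λ, μ, α, α', β, β'. In this case λ = a_{1,1}+a_{1,4}, μ = a_{2,2}+a_{2,3}, α = a_{2,2}-a_{2,3}, α' = a_{2,4}-a_{2,1}, β = a_{1,1}-a_{1,4}, and β' = a_{1,3}-a_{1,2}. -/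
import Mathlib


/-- The matrix `S` of the generalized Fourier transform for SSM matrices. -/
def Smat : Matrix (Fin 4) (Fin 4) ℝ :=
  !![1, 0, 0, -1; 0, 1, 1, 0; 0, 1, -1, 0; 1, 0, 0, 1]

/-- The conjugation `F(A) = S⁻¹ A S`. -/
noncomputable def F (A : Matrix (Fin 4) (Fin 4) ℝ) : Matrix (Fin 4) (Fin 4) ℝ :=
  Smat⁻¹ * A * Smat

/-- A strand symmetric (SSM) matrix: rows `(a,b,c,d), (e,f,g,h), (h,g,f,e), (d,c,b,a)`
with row sums equal to `1`. -/
def IsSSM (A : Matrix (Fin 4) (Fin 4) ℝ) : Prop :=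
  (∀ i, ∑ j, A i j = 1) ∧
    A 2 0 = A 1 3 ∧ A 2 1 = A 1 2 ∧ A 2 2 = A 1 1 ∧ A 2 3 = A 1 0 ∧
    A 3 0 = A 0 3 ∧ A 3 1 = A 0 2 ∧ A 3 2 = A 0 1 ∧ A 3 3 = A 0 0

noncomputable def Sinv : Matrix (Fin 4) (Fin 4) ℝ :=
  !![1/2, 0, 0, 1/2; 0, 1/2, 1/2, 0; 0, 1/2, -1/2, 0; -1/2, 0, 0, 1/2]

lemma smat_inv : Smat⁻¹ = Sinv := by
  apply Matrix.inv_eq_right_inv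
  ext i j
  fin_cases i <;> fin_cases j <;>
    simp [Smat, Sinv, Matrix.mul_apply, Fin.sum_univ_four, Matrix.one_apply] <;> norm_num

lemma F_apply (A : Matrix (Fin 4) (Fin 4) ℝ) (i j : Fin 4) :
    F A i j = ∑ l, ∑ k, Sinv i k * A k l * Smat l j := by
  simp [F, smat_inv, Matrix.mul_apply, Finset.sum_mul]

set_option maxHeartbeats 1000000 in
theorem stmt_11 (A : Matrix (Fin 4) (Fin 4) ℝ) (hrow : ∀ i, ∑ j, A i j = 1) :
    (IsSSM A ↔
      ∃ lam mu al al' be be' : ℝ,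
        F A = !![lam, 1 - lam, 0, 0; 1 - mu, mu, 0, 0; 0, 0, al, al'; 0, 0, be', be]) ∧
    (IsSSM A →
      F A = !![A 0 0 + A 0 3, 1 - (A 0 0 + A 0 3), 0, 0;
               1 - (A 1 1 + A 1 2), A 1 1 + A 1 2, 0, 0;
               0, 0, A 1 1 - A 1 2, A 1 3 - A 1 0;
               0, 0, A 0 2 - A 0 1, A 0 0 - A 0 3]) := by
  have h0 := hrow 0; have h1 := hrow 1
  simp only [Fin.sum_univ_four] at h0 h1
  have key : ∀ h : IsSSM A,
      F A = !![A 0 0 + A 0 3, 1 - (A 0 0 + A 0 3), 0, 0;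
               1 - (A 1 1 + A 1 2), A 1 1 + A 1 2, 0, 0;
               0, 0, A 1 1 - A 1 2, A 1 3 - A 1 0;
               0, 0, A 0 2 - A 0 1, A 0 0 - A 0 3] := by
    rintro ⟨-, e1, e2, e3, e4, e5, e6, e7, e8⟩
    ext i j
    fin_cases i <;> fin_cases j <;>
      simp [F_apply, Fin.sum_univ_four, Smat, Sinv, Matrix.vecHead, Matrix.vecTail] <;>
      linarith
  refine ⟨⟨fun h => ⟨_, _, _, _, _, _, key h⟩, ?_⟩, key⟩
  rintro ⟨lam, mu, al, al', be, be', hF⟩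
  have g : ∀ i j, F A i j = (!![lam, 1 - lam, 0, 0; 1 - mu, mu, 0, 0;
      0, 0, al, al'; 0, 0, be', be] : Matrix (Fin 4) (Fin 4) ℝ) i j := fun i j => by rw [hF]
  have g02 := g 0 2
  have g03 := g 0 3
  have g12 := g 1 2
  have g13 := g 1 3
  have g20 := g 2 0
  have g21 := g 2 1
  have g30 := g 3 0
  have g31 := g 3 1
  simp [F_apply, Fin.sum_univ_four, Smat, Sinv, Matrix.vecHead, Matrix.vecTail]
    at g02 g03 g12 g13 g20 g21 g30 g31
  exact ⟨hrow, by linarith, by linarith, by linarith, by linarith,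
    by linarith, by linarith, by linarith, by linarith⟩
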